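/- arXiv:1304.4257 — 4 statements merged into one kernel-verified Lean document; each statement's English description precedes it below -/
import Mathlib

section
/- Let A be an m×n integer matrix with positive kernel lattice L = ker_Z(A) (i.e., L ∩ N^n = {0}). If u ∈ L admits a conformal decomposition u = v +_c w with v, w nonzero elements of L, then u^+ and u^- lie in the same connected component of the fiber graph G_u. Consequently, every element of the universal Markov basis of A belongs to the Graver basis of A. -/
/-- Componentwise positive part of an integer vector. -/
def vpos {n : ℕ} (u : Fin n → ℤ) : Fin n → ℤ := fun i => max (u i) 0
/-- Componentwise negative part of an integer vector. -/
def vneg {n : ℕ} (u : Fin n → ℤ) : Fin n → ℤ := fun i => max (-u i) 0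

/-- The fiber of `u` with respect to the kernel lattice of `A`. -/
def fiber {m n : ℕ} (A : Matrix (Fin m) (Fin n) ℤ) (u : Fin n → ℤ) : Set (Fin n → ℤ) :=
  {t | (∀ i, 0 ≤ t i) ∧ A.mulVec (vpos u - t) = 0}

/-- The edge relation of the fiber graph `G_u`: two fiber elements are adjacent iff they share
a nonzero coordinate. -/
def fiberEdge {m n : ℕ} (A : Matrix (Fin m) (Fin n) ℤ) (u : Fin n → ℤ)
    (w₁ w₂ : Fin n → ℤ) : Prop :=
  w₁ ∈ fiber A u ∧ w₂ ∈ fiber A u ∧ ∃ i, w₁ i ≠ 0 ∧ w₂ i ≠ 0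

/-- `w₁` and `w₂` lie in the same connected component of `G_u`. -/
def sameComponent {m n : ℕ} (A : Matrix (Fin m) (Fin n) ℤ) (u : Fin n → ℤ)
    (w₁ w₂ : Fin n → ℤ) : Prop :=
  Relation.ReflTransGen (fiberEdge A u) w₁ w₂

/-!
If `u = v + w` conformally, then `t = v⁺ + w⁻` lies in the fiber of `u`, since `u⁺ - t = w`.
By positivity of the lattice `v` has a positive and `w` a negative coordinate; the first is a
common support coordinate of `u⁺` and `t`, the second one of `t` and `u⁻`, so
`u⁺ — t — u⁻` is a path in `G_u`.
-/

section PosNegParts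

variable {n : ℕ}

lemma vpos_nonneg (u : Fin n → ℤ) (i : Fin n) : 0 ≤ vpos u i := le_max_right _ _

lemma vneg_nonneg (u : Fin n → ℤ) (i : Fin n) : 0 ≤ vneg u i := le_max_right _ _

lemma vpos_sub_vneg (u : Fin n → ℤ) : vpos u - vneg u = u := by
  funext i
  simp only [vpos, vneg, Pi.sub_apply]
  omega

end PosNegParts

section Fiber

variable {m n : ℕ} (A : Matrix (Fin m) (Fin n) ℤ)

lemma exists_pos_of_mulVec_eq_zero
    (hpos : ∀ x : Fin n → ℤ, A.mulVec x = 0 → (∀ i, 0 ≤ x i) → x = 0)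
    {x : Fin n → ℤ} (hx : A.mulVec x = 0) (hx₀ : x ≠ 0) : ∃ i, 0 < x i := by
  by_contra! h
  have hnx : -x = 0 :=
    hpos (-x) (by rw [Matrix.mulVec_neg, hx, neg_zero]) fun i => neg_nonneg.mpr (h i)
  exact hx₀ (neg_eq_zero.mp hnx)

lemma exists_neg_of_mulVec_eq_zero
    (hpos : ∀ x : Fin n → ℤ, A.mulVec x = 0 → (∀ i, 0 ≤ x i) → x = 0)
    {x : Fin n → ℤ} (hx : A.mulVec x = 0) (hx₀ : x ≠ 0) : ∃ i, x i < 0 := by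
  by_contra! h
  exact hx₀ (hpos x hx h)

lemma vpos_mem_fiber (u : Fin n → ℤ) : vpos u ∈ fiber A u :=
  ⟨vpos_nonneg u, by rw [sub_self, Matrix.mulVec_zero]⟩

lemma vneg_mem_fiber {u : Fin n → ℤ} (hu : A.mulVec u = 0) : vneg u ∈ fiber A u :=
  ⟨vneg_nonneg u, by rw [vpos_sub_vneg, hu]⟩

lemma vpos_add_vneg_mem_fiber {u v w : Fin n → ℤ} (hw : A.mulVec w = 0)
    (hp : vpos u = vpos v + vpos w) : vpos v + vneg w ∈ fiber A u := by
  refine ⟨fun i => add_nonneg (vpos_nonneg v i) (vneg_nonneg w i), ?_⟩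
  rw [hp, add_sub_add_left_eq_sub, vpos_sub_vneg, hw]

lemma sameComponent_vpos_vneg_of_conformal
    (hpos : ∀ x : Fin n → ℤ, A.mulVec x = 0 → (∀ i, 0 ≤ x i) → x = 0)
    {u v w : Fin n → ℤ} (hu : A.mulVec u = 0) (hv : A.mulVec v = 0) (hw : A.mulVec w = 0)
    (hv₀ : v ≠ 0) (hw₀ : w ≠ 0) (hp : vpos u = vpos v + vpos w)
    (hn : vneg u = vneg v + vneg w) :
    sameComponent A u (vpos u) (vneg u) := by
  have ht := vpos_add_vneg_mem_fiber A hw hp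
  obtain ⟨i, hi⟩ := exists_pos_of_mulVec_eq_zero A hpos hv hv₀
  obtain ⟨j, hj⟩ := exists_neg_of_mulVec_eq_zero A hpos hw hw₀
  have hpi := congrFun hp i
  have hnj := congrFun hn j
  simp only [vpos, vneg, Pi.add_apply] at hpi hnj
  have edge₁ : fiberEdge A u (vpos u) (vpos v + vneg w) :=
    ⟨vpos_mem_fiber A u, ht, i, by simp only [vpos, vneg, Pi.add_apply]; omega⟩
  have edge₂ : fiberEdge A u (vpos v + vneg w) (vneg u) :=
    ⟨ht, vneg_mem_fiber A hu, j, by simp only [vpos, vneg, Pi.add_apply]; omega⟩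
  exact .head edge₁ (.single edge₂)

end Fiber

/-- If the kernel lattice of `A` is positive and `u ∈ ker_ℤ(A)` has a conformal decomposition
into nonzero kernel elements, then `u⁺` and `u⁻` lie in the same connected component of `G_u`;
consequently, every element of the universal Markov basis of `A` (characterized by `u⁺` and `u⁻`
lying in different components of `G_u`) belongs to the Graver basis of `A`. -/
theorem conformal_implies_connected_and_markov_subset_graver
    {m n : ℕ} (A : Matrix (Fin m) (Fin n) ℤ)
    (hpos : ∀ x : Fin n → ℤ, A.mulVec x = 0 → (∀ i, 0 ≤ x i) → x = 0) :
    (∀ u v w : Fin n → ℤ, A.mulVec u = 0 → A.mulVec v = 0 → A.mulVec w = 0 →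
      v ≠ 0 → w ≠ 0 → u = v + w → vpos u = vpos v + vpos w → vneg u = vneg v + vneg w →
      sameComponent A u (vpos u) (vneg u)) ∧
    (∀ u : Fin n → ℤ, A.mulVec u = 0 → u ≠ 0 →
      ¬ sameComponent A u (vpos u) (vneg u) →
      -- u is in the Graver basis: no conformal decomposition into nonzero kernel elements
      ¬ ∃ v w : Fin n → ℤ, A.mulVec v = 0 ∧ A.mulVec w = 0 ∧ v ≠ 0 ∧ w ≠ 0 ∧
        u = v + w ∧ vpos u = vpos v + vpos w ∧ vneg u = vneg v + vneg w) := by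
  refine ⟨fun u v w hu hv hw hv₀ hw₀ _ hp hn =>
    sameComponent_vpos_vneg_of_conformal A hpos hu hv hw hv₀ hw₀ hp hn, ?_⟩
  rintro u hu - hdisconnected ⟨v, w, hv, hw, hv₀, hw₀, -, hp, hn⟩
  exact hdisconnected (sameComponent_vpos_vneg_of_conformal A hpos hu hv hw hv₀ hw₀ hp hn)
end

section
/- Let L ⊆ Z^n be a lattice generated by a single nonzero nonnegative vector w. For any two coprime integers k, l ≥ 2, the set {k·w, l·w} is a Markov basis of L, and it is minimal (no proper subset is a Markov basis). -/
/-- `M` is a Markov basis of the lattice `L ⊆ ℤⁿ`: any two nonnegative vectors whose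
difference lies in `L` are connected by a sequence of moves from `±M` staying in `ℕⁿ`. -/
def IsMarkovBasis {n : ℕ} (L : AddSubgroup (Fin n → ℤ)) (M : Set (Fin n → ℤ)) : Prop :=
  (M ⊆ L) ∧
  ∀ a b : Fin n → ℤ, (∀ i, 0 ≤ a i) → (∀ i, 0 ≤ b i) → a - b ∈ L →
    ∃ (s : ℕ) (v : Fin s → (Fin n → ℤ)),
      (∀ i, v i ∈ M ∨ -v i ∈ M) ∧
      (∀ p : Fin s, ∀ j, 0 ≤ (a + ∑ i ∈ Finset.Iic p, v i) j) ∧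
      a + ∑ i, v i = b

/-!
Write `b - a = m • w` and, by coprimality, `m = x * k - y * l` with `x, y ≥ 0`. Taking first the
`x` moves `+k • w` and then the `y` moves `-l • w` stays nonnegative: the first phase only adds
nonnegative vectors to `a`, and every point of the second phase is `b` plus a nonnegative multiple
of `l • w`. For minimality, a Markov basis generates `L` (write `z = z⁺ - z⁻`), whereas a single
vector `c • w` with `c ≥ 2` does not generate `w`.
-/

open Finset AddSubgroup

theorem IsCoprime.exists_nat_mul_sub_nat_mul_eq {k l : ℤ} (hk : 0 < k) (hl : 0 < l)
    (hkl : IsCoprime k l) (m : ℤ) : ∃ x y : ℕ, x * k - y * l = m := by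
  obtain ⟨u, v, huv⟩ := hkl
  set t := |m * u| + |m * v|
  have ht : 0 ≤ t := by positivity
  have htl : t ≤ t * l := le_mul_of_one_le_right ht (by omega)
  have htk : t ≤ t * k := le_mul_of_one_le_right ht (by omega)
  have hx : 0 ≤ m * u + t * l := by linarith [neg_abs_le (m * u), abs_nonneg (m * v)]
  have hy : 0 ≤ t * k - m * v := by linarith [le_abs_self (m * v), abs_nonneg (m * u)]
  lift m * u + t * l to ℕ using hx with x hx'
  lift t * k - m * v to ℕ using hy with y hy'
  exact ⟨x, y, by rw [hx', hy']; linear_combination m * huv⟩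

theorem Finset.sum_range_ite_lt {α : Type*} [AddCommMonoid α] (x q : ℕ) (u v : α) :
    ∑ i ∈ range q, (if i < x then u else v) = min q x • u + (q - x) • v := by
  induction q with
  | zero => simp
  | succ q ih =>
    rw [sum_range_succ, ih]
    split_ifs with h
    · rw [min_eq_left h.le, min_eq_left h, Nat.sub_eq_zero_of_le h.le,
        Nat.sub_eq_zero_of_le h, succ_nsmul]
      abel
    · rw [min_eq_right (by omega), min_eq_right (by omega), show q + 1 - x = q - x + 1 by omega,
        succ_nsmul]
      abel

theorem Fin.sum_Iic_eq_sum_range {α : Type*} [AddCommMonoid α] {s : ℕ} (p : Fin s)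
    (f : ℕ → α) : ∑ i ∈ Iic p, f i = ∑ i ∈ range (p + 1), f i := by
  rw [Nat.range_succ_eq_Iic, ← Fin.map_valEmbedding_Iic, sum_map]
  rfl

section OrderedWalk

variable {α : Type*} [AddCommGroup α] [PartialOrder α] [IsOrderedAddMonoid α]
  {a b u v : α} {x y : ℕ}

theorem add_min_nsmul_sub_nsmul_nonneg (ha : 0 ≤ a) (hb : 0 ≤ b) (hu : 0 ≤ u) (hv : 0 ≤ v)
    (hab : a + x • u - y • v = b) {q : ℕ} (hq : q ≤ x + y) :
    0 ≤ a + min q x • u - (q - x) • v := by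
  rcases le_total q x with h | h
  · rw [min_eq_left h, Nat.sub_eq_zero_of_le h, zero_nsmul, sub_zero]
    exact add_nonneg ha (nsmul_nonneg hu q)
  · obtain ⟨r, rfl⟩ : ∃ r, y = q - x + r := ⟨y - (q - x), by omega⟩
    have hb' : a + x • u - (q - x) • v = b + r • v := by
      rw [← hab, add_nsmul]
      abel
    rw [min_eq_right h, hb']
    exact add_nonneg hb (nsmul_nonneg hv r)

theorem exists_nonneg_walk (ha : 0 ≤ a) (hb : 0 ≤ b) (hu : 0 ≤ u) (hv : 0 ≤ v)
    (hab : a + x • u - y • v = b) :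
    ∃ (s : ℕ) (m : Fin s → α), (∀ i, m i = u ∨ m i = -v) ∧
      (∀ p : Fin s, 0 ≤ a + ∑ i ∈ Iic p, m i) ∧ a + ∑ i, m i = b := by
  have hsum (q : ℕ) : a + ∑ i ∈ range q, (if i < x then u else -v) =
      a + min q x • u - (q - x) • v := by
    rw [sum_range_ite_lt, smul_neg, ← sub_eq_add_neg, add_sub_assoc]
  refine ⟨x + y, fun i => if (i : ℕ) < x then u else -v, fun i => ite_eq_or_eq _ _ _,
    fun p => ?_, ?_⟩
  · rw [Fin.sum_Iic_eq_sum_range p (fun i => if i < x then u else -v), hsum]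
    exact add_min_nsmul_sub_nsmul_nonneg ha hb hu hv hab (by omega)
  · rw [Fin.sum_univ_eq_sum_range (fun i => if i < x then u else -v), hsum,
      min_eq_right (by omega), Nat.add_sub_cancel_left, hab]

end OrderedWalk

theorem IsMarkovBasis.closure_eq {n : ℕ} {L : AddSubgroup (Fin n → ℤ)} {M : Set (Fin n → ℤ)}
    (h : IsMarkovBasis L M) : AddSubgroup.closure M = L := by
  refine le_antisymm ((closure_le L).mpr h.1) fun z hz => ?_
  obtain ⟨s, m, hm, -, hsum⟩ := h.2 z⁺ z⁻ (posPart_nonneg z) (negPart_nonneg z)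
    ((posPart_sub_negPart z).symm ▸ hz)
  have hmem : ∑ i, m i ∈ AddSubgroup.closure M := sum_mem fun i _ => by
    rcases hm i with hi | hi
    · exact subset_closure hi
    · exact neg_mem_iff.mp (subset_closure hi)
  rw [← posPart_sub_negPart z, ← hsum, sub_add_cancel_left]
  exact neg_mem hmem

theorem zmultiples_not_le_zmultiples_smul {M : Type*} [AddCommGroup M]
    [Module.IsTorsionFree ℤ M] {w : M} (hw : w ≠ 0) {c : ℤ} (hc : ¬IsUnit c) :
    ¬zmultiples w ≤ zmultiples (c • w) := fun h => by
  obtain ⟨t, ht⟩ := mem_zmultiples_iff.mp (h (mem_zmultiples w))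
  rw [smul_smul, ← one_smul ℤ w, smul_smul, mul_one] at ht
  exact hc (IsUnit.of_mul_eq_one_right t (smul_left_injective ℤ hw ht))

theorem not_isMarkovBasis_of_subset_singleton_smul {n : ℕ} {w : Fin n → ℤ} (hw : w ≠ 0)
    {c : ℤ} (hc : ¬IsUnit c) {S : Set (Fin n → ℤ)} (hS : S ⊆ {c • w}) :
    ¬IsMarkovBasis (zmultiples w) S := fun h => by
  apply zmultiples_not_le_zmultiples_smul hw hc
  rw [← h.closure_eq, zmultiples_eq_closure]
  exact closure_mono hS

theorem isMarkovBasis_zmultiples_pair {n : ℕ} {w : Fin n → ℤ} (hw : 0 ≤ w) {k l : ℤ}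
    (hk : 0 < k) (hl : 0 < l) (hkl : IsCoprime k l) :
    IsMarkovBasis (zmultiples w) {k • w, l • w} := by
  refine ⟨?_, fun a b ha hb hab => ?_⟩
  · rintro _ (rfl | rfl) <;> exact zsmul_mem (mem_zmultiples w) _
  obtain ⟨m, hm⟩ := mem_zmultiples_iff.mp hab
  obtain ⟨x, y, hxy⟩ := hkl.exists_nat_mul_sub_nat_mul_eq hk hl (-m)
  have hab' : a + x • k • w - y • l • w = b := by
    rw [← natCast_zsmul, ← natCast_zsmul, smul_smul, smul_smul, add_sub_assoc, ← sub_smul, hxy,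
      neg_smul, hm]
    abel
  obtain ⟨s, v, hv, hpos, hsum⟩ :=
    exists_nonneg_walk ha hb (smul_nonneg hk.le hw) (smul_nonneg hl.le hw) hab'
  refine ⟨s, v, fun i => ?_, fun p => hpos p, hsum⟩
  rcases hv i with h | h <;> simp [h]

/-- If `L` is generated by a single nonzero nonnegative vector `w`, then for any coprime
integers `k, l ≥ 2`, the set `{k•w, l•w}` is a minimal Markov basis of `L`. -/
theorem markov_basis_coprime_multiples {n : ℕ} (w : Fin n → ℤ)
    (hw : w ≠ 0) (hwpos : ∀ i, 0 ≤ w i) (k l : ℤ) (hk : 2 ≤ k) (hl : 2 ≤ l)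
    (hcop : IsCoprime k l) :
    IsMarkovBasis (AddSubgroup.zmultiples w) ({k • w, l • w} : Set (Fin n → ℤ)) ∧
    ∀ S : Set (Fin n → ℤ), S ⊂ ({k • w, l • w} : Set (Fin n → ℤ)) →
      ¬ IsMarkovBasis (AddSubgroup.zmultiples w) S := by
  refine ⟨isMarkovBasis_zmultiples_pair hwpos (by omega) (by omega) hcop, fun S hS => ?_⟩
  have not_isUnit {c : ℤ} (hc : 2 ≤ c) : ¬IsUnit c := by
    rw [Int.isUnit_iff]
    omega
  rcases Set.subset_pair_iff_eq.mp hS.subset with rfl | rfl | rfl | rfl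
  · exact not_isMarkovBasis_of_subset_singleton_smul hw (not_isUnit hk) (Set.empty_subset _)
  · exact not_isMarkovBasis_of_subset_singleton_smul hw (not_isUnit hk) subset_rfl
  · exact not_isMarkovBasis_of_subset_singleton_smul hw (not_isUnit hl) subset_rfl
  · exact absurd rfl hS.ne
end

section
/- Suppose L_r = ker_Z(Λ(A,B,r)) is positive (L_r ∩ N^{rn} = {0}). Let W, V ∈ L_r have equal Λ(A,B,r)-degree, i.e., Λ(A,B,r)·W^+ = Λ(A,B,r)·V^+. Then, viewing W and V as r×n matrices, the set of indices of nonzero rows of V is contained in the set of indices of nonzero rows of W; hence by symmetry the two sets are equal, and W and V have the same type. -/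
lemma vpos_zero {n : ℕ} : vpos (0 : Fin n → ℤ) = 0 := by
  funext i
  simp [vpos]

lemma vpos_eq_zero_iff {n : ℕ} {u : Fin n → ℤ} : vpos u = 0 ↔ ∀ i, u i ≤ 0 := by
  simp only [funext_iff, vpos, Pi.zero_apply, max_eq_right_iff]

section PositiveKernel

variable {m n : ℕ} {A : Matrix (Fin m) (Fin n) ℤ}

lemma Matrix.eq_zero_of_mulVec_vpos_eq_zero
    (hpos : ∀ x : Fin n → ℤ, A.mulVec x = 0 → (∀ i, 0 ≤ x i) → x = 0)
    {x : Fin n → ℤ} (hx : A.mulVec x = 0) (hx' : A.mulVec (vpos x) = 0) : x = 0 := by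
  have hnonpos : ∀ i, x i ≤ 0 :=
    vpos_eq_zero_iff.mp (hpos _ hx' fun i => le_max_right _ _)
  have hneg : -x = 0 :=
    hpos (-x) (by rw [Matrix.mulVec_neg, hx, neg_zero]) fun i => by simpa using hnonpos i
  exact neg_eq_zero.mp hneg

lemma Matrix.eq_zero_of_mulVec_vpos_eq
    (hpos : ∀ x : Fin n → ℤ, A.mulVec x = 0 → (∀ i, 0 ≤ x i) → x = 0)
    {x y : Fin n → ℤ} (hy : A.mulVec y = 0) (hdeg : A.mulVec (vpos x) = A.mulVec (vpos y))
    (hx0 : x = 0) : y = 0 :=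
  Matrix.eq_zero_of_mulVec_vpos_eq_zero hpos hy <| by
    rw [← hdeg, hx0, vpos_zero, Matrix.mulVec_zero]

end PositiveKernel

theorem equal_degree_same_type_general {m n r : ℕ}
    (A : Matrix (Fin m) (Fin n) ℤ)
    (hposA : ∀ x : Fin n → ℤ, A.mulVec x = 0 → (∀ i, 0 ≤ x i) → x = 0)
    (W V : Fin r → Fin n → ℤ)
    (hWA : ∀ j, A.mulVec (W j) = 0)
    (hVA : ∀ j, A.mulVec (V j) = 0)
    (hdegA : ∀ j, A.mulVec (vpos (W j)) = A.mulVec (vpos (V j))) :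
    {j | V j ≠ 0} ⊆ {j | W j ≠ 0} ∧ {j | V j ≠ 0} = {j | W j ≠ 0} := by
  have hVW : ∀ j, W j = 0 → V j = 0 := fun j =>
    A.eq_zero_of_mulVec_vpos_eq hposA (hVA j) (hdegA j)
  have hWV : ∀ j, V j = 0 → W j = 0 := fun j =>
    A.eq_zero_of_mulVec_vpos_eq hposA (hWA j) (hdegA j).symm
  have hsub : {j | V j ≠ 0} ⊆ {j | W j ≠ 0} := fun j hV hW => hV (hVW j hW)
  exact ⟨hsub, hsub.antisymm fun j hW hV => hW (hWV j hV)⟩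

/-- Suppose the kernel lattice of the generalized Lawrence lifting `Λ(A,B,r)` is positive.
If `W, V ∈ ker_ℤ(Λ(A,B,r))` (viewed as `r×n` matrices: rows in `ker_ℤ(A)`, row sum in
`ker_ℤ(B)`) have the same `Λ(A,B,r)`-degree `Λ(A,B,r)·W⁺ = Λ(A,B,r)·V⁺`, then the nonzero
rows of `V` are among the nonzero rows of `W`; hence the two sets of indices coincide and
`W` and `V` have the same type. -/
theorem equal_degree_same_type {m n p r : ℕ} (hr : 2 ≤ r)
    (A : Matrix (Fin m) (Fin n) ℤ) (B : Matrix (Fin p) (Fin n) ℤ)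
    (hposr : ∀ C : Fin r → Fin n → ℤ, (∀ j, A.mulVec (C j) = 0) →
      B.mulVec (∑ j, C j) = 0 → (∀ j i, 0 ≤ C j i) → C = 0)
    (hposA : ∀ x : Fin n → ℤ, A.mulVec x = 0 → (∀ i, 0 ≤ x i) → x = 0)
    (W V : Fin r → Fin n → ℤ)
    (hWA : ∀ j, A.mulVec (W j) = 0) (hWB : B.mulVec (∑ j, W j) = 0)
    (hVA : ∀ j, A.mulVec (V j) = 0) (hVB : B.mulVec (∑ j, V j) = 0)
    (hdegA : ∀ j, A.mulVec (vpos (W j)) = A.mulVec (vpos (V j)))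
    (hdegB : B.mulVec (∑ j, vpos (W j)) = B.mulVec (∑ j, vpos (V j))) :
    {j | V j ≠ 0} ⊆ {j | W j ≠ 0} ∧ {j | V j ≠ 0} = {j | W j ≠ 0} :=
  equal_degree_same_type_general A hposA W V hWA hVA hdegA
end

section
/- Let L ⊆ Z^n be a lattice with L ∩ N^n = {0} and let u ∈ L. Then the fiber F_u = {t ∈ N^n : u^+ - t ∈ L} is a finite set. -/
theorem isPWO_setOf_forall_nonneg {ι : Type*} [Finite ι] :
    {t : ι → ℤ | ∀ i, 0 ≤ t i}.IsPWO := by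
  have hcast :
      {t : ι → ℤ | ∀ i, 0 ≤ t i} = (fun t i => (t i : ℤ)) '' (Set.univ : Set (ι → ℕ)) := by
    ext t
    refine ⟨fun ht => ⟨fun i => (t i).toNat, trivial, funext fun i => Int.toNat_of_nonneg (ht i)⟩,
      ?_⟩
    rintro ⟨t, -, rfl⟩ i
    exact Int.natCast_nonneg _
  rw [hcast]
  exact (Set.isPWO_of_wellQuasiOrderedLE _).image_of_monotone fun _ _ h i => Int.ofNat_le.mpr (h i)

theorem AddSubgroup.isAntichain_setOf_sub_mem {α : Type*} [AddCommGroup α] [PartialOrder α]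
    [IsOrderedAddMonoid α] (L : AddSubgroup α) (hpos : ∀ x ∈ L, 0 ≤ x → x = 0) (v : α) :
    IsAntichain (· ≤ ·) {t | v - t ∈ L} := by
  intro s hs t ht hne hst
  have hdiff : t - s ∈ L := by simpa using L.sub_mem hs ht
  exact hne (sub_eq_zero.mp (hpos _ hdiff (sub_nonneg.mpr hst))).symm

theorem fiber_finite_general {n : ℕ} (L : AddSubgroup (Fin n → ℤ))
    (hpos : ∀ x ∈ L, (∀ i, 0 ≤ x i) → x = 0)
    (u : Fin n → ℤ) :
    Set.Finite {t : Fin n → ℤ | (∀ i, 0 ≤ t i) ∧ vpos u - t ∈ L} :=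
  have hanti := (L.isAntichain_setOf_sub_mem hpos (vpos u)).subset Set.inter_subset_right
  hanti.finite_of_partiallyWellOrderedOn (isPWO_setOf_forall_nonneg.mono Set.inter_subset_left)

/-- For a positive lattice `L ⊆ ℤⁿ` and `u ∈ L`, the fiber
`F_u = {t ∈ ℕⁿ : u⁺ - t ∈ L}` is finite. -/
theorem fiber_finite {n : ℕ} (L : AddSubgroup (Fin n → ℤ))
    (hpos : ∀ x ∈ L, (∀ i, 0 ≤ x i) → x = 0)
    (u : Fin n → ℤ) (hu : u ∈ L) :
    Set.Finite {t : Fin n → ℤ | (∀ i, 0 ≤ t i) ∧ vpos u - t ∈ L} :=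
  fiber_finite_general L hpos u
end
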